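/- Let n ≥ 3 and 1 ≤ h ≤ n. In Q_n, let u = 0ⁿ, let F_e consist of h edges incident to u (the edges from u to its i-th neighbors for i = 1,…,h), let F₁ = {u^(h+1), …, u^n} (the remaining n − h neighbors of u), and F₂ = F₁ ∪ {u}. Then in the graph Q_n − F_e there is no edge between V − (F₁ ∪ F₂) and F₁ Δ F₂ (so F₁ and F₂ are indistinguishable under the PMC model). -/

import Mathlib

/-! The symmetric difference of `F₁` and `F₂` is `{u}`, and every neighbour of `u` that survives
the deletion of `F_e` is some `u^i` with `i ≥ h`, which lies in `F₁`. -/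

/-- The n-dimensional hypercube: vertices are `Fin n → Bool`,
adjacent iff Hamming distance exactly 1. -/
def Qn (n : ℕ) : SimpleGraph (Fin n → Bool) where
  Adj u v := hammingDist u v = 1
  symm := ⟨fun u v (h : hammingDist u v = 1) => show hammingDist v u = 1 by rwa [hammingDist_comm]⟩
  loopless := ⟨fun u (h : hammingDist u u = 1) => by simp [hammingDist_self] at h⟩

instance (n : ℕ) : DecidableRel (Qn n).Adj :=
  fun u v => inferInstanceAs (Decidable (hammingDist u v = 1))

theorem exists_eq_update_of_hammingDist_eq_one {ι : Type*} [Fintype ι] [DecidableEq ι]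
    {β : ι → Type*} [∀ i, DecidableEq (β i)] {u v : ∀ i, β i} (huv : hammingDist u v = 1) :
    ∃ i, v = Function.update u i (v i) := by
  obtain ⟨i, hi⟩ := Finset.card_eq_one.1 huv
  refine ⟨i, funext fun j => ?_⟩
  rcases eq_or_ne j i with rfl | hji
  · simp
  · rw [Function.update_of_ne hji]
    by_contra hne
    exact hji (Finset.mem_singleton.1 (hi ▸ Finset.mem_filter.2 ⟨Finset.mem_univ j, Ne.symm hne⟩))

theorem Qn.exists_eq_update_not_of_adj {n : ℕ} {u v : Fin n → Bool} (huv : (Qn n).Adj u v) :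
    ∃ i, v = Function.update u i (!u i) := by
  obtain ⟨i, hi⟩ := exists_eq_update_of_hammingDist_eq_one huv
  have hne : u i ≠ v i := fun heq =>
    huv.ne (hi.trans (by rw [← heq, Function.update_eq_self])).symm
  exact ⟨i, by rwa [← Bool.eq_not.2 hne.symm]⟩

theorem Set.symmDiff_union_singleton_subset {α : Type*} (s : Set α) (a : α) :
    symmDiff s (s ∪ {a}) ⊆ {a} := by
  rw [symmDiff_of_le Set.subset_union_left, Set.union_sdiff_left]
  exact Set.sdiff_subset

theorem indistinguishable_construction_general (n h : ℕ) :
    letI u : Fin n → Bool := fun _ => false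
    letI Fe : Set (Sym2 (Fin n → Bool)) :=
      {e | ∃ i : Fin n, (i : ℕ) < h ∧ e = s(u, Function.update u i true)}
    letI F₁ : Set (Fin n → Bool) :=
      {v | ∃ i : Fin n, h ≤ (i : ℕ) ∧ v = Function.update u i true}
    letI F₂ : Set (Fin n → Bool) := F₁ ∪ {u}
    ¬ ∃ x, x ∉ F₁ ∪ F₂ ∧ ∃ y ∈ symmDiff F₁ F₂, ((Qn n).deleteEdges Fe).Adj x y := by
  rintro ⟨x, hx, y, hy, hxy⟩
  obtain rfl : y = fun _ => false := Set.symmDiff_union_singleton_subset _ _ hy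
  obtain ⟨hxu, hxuFe⟩ := (SimpleGraph.deleteEdges_adj ..).1 hxy
  obtain ⟨i, rfl⟩ := Qn.exists_eq_update_not_of_adj hxu.symm
  rcases lt_or_ge (i : ℕ) h with hi | hi
  · exact hxuFe ⟨i, hi, Sym2.eq_swap⟩
  · exact hx (Or.inl ⟨i, hi, rfl⟩)

theorem indistinguishable_construction (n h : ℕ) (hn : 3 ≤ n) (hh1 : 1 ≤ h)
    (hhn : h ≤ n) :
    letI u : Fin n → Bool := fun _ => false
    letI Fe : Set (Sym2 (Fin n → Bool)) :=
      {e | ∃ i : Fin n, (i : ℕ) < h ∧ e = s(u, Function.update u i true)}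
    letI F₁ : Set (Fin n → Bool) :=
      {v | ∃ i : Fin n, h ≤ (i : ℕ) ∧ v = Function.update u i true}
    letI F₂ : Set (Fin n → Bool) := F₁ ∪ {u}
    ¬ ∃ x, x ∉ F₁ ∪ F₂ ∧ ∃ y ∈ symmDiff F₁ F₂, ((Qn n).deleteEdges Fe).Adj x y :=
  indistinguishable_construction_general n h
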